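/- Mutual-information lower bound via the semantic rate-distortion function (the bound on I(S*,X*;Z*) used to control |T_V(z^n)| in Appendix A): Let Q_X be a pmf on 𝒳, U_{S|X} : 𝒳 → pmf(𝒮) and V_{Z|X} : 𝒳 → pmf(𝒵), and let the joint pmf on 𝒮×𝒳×𝒵 be P(s,x,z) = Q_X(x)·U_{S|X}(s|x)·V_{Z|X}(z|x) (so S and Z are conditionally independent given X). If there exist maps g_S : 𝒵 → Ŝ and g_X : 𝒵 → X̂ such that E_P[d_S(S,g_S(Z))] ≤ D_s and E_P[d_X(X,g_X(Z))] ≤ D_x, then I(X;Z) ≥ R(Q_X,U_{S|X},D_s,D_x). -/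
import Mathlib


/-!
Mutual-information lower bound via the semantic rate-distortion function
(the bound used to control the conditional type class `|T_V(z^n)|` in Appendix A).
-/

open scoped BigOperators

/-- `p` is a probability mass function on the finite type `α`. -/
def IsPMF {α : Type*} [Fintype α] (p : α → ℝ) : Prop :=
  (∀ a, 0 ≤ p a) ∧ ∑ a, p a = 1

/-- `p` is a conditional probability mass function from `α` to `β`. -/
def IsCondPMF {α β : Type*} [Fintype β] (p : α → β → ℝ) : Prop :=
  ∀ a, IsPMF (p a)

/-- Mutual information of a joint pmf `p` on `α × β` (given in curried form). -/
noncomputable def mutualInfo {α β : Type*} [Fintype α] [Fintype β] (p : α → β → ℝ) : ℝ :=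
  ∑ a, ∑ b, p a b * Real.log (p a b / ((∑ b', p a b') * (∑ a', p a' b)))

/-- The semantic rate-distortion function `R(Q_X, U_{S|X}, D_s, D_x)`. -/
noncomputable def semRD {𝒮 𝒳 Sh Xh : Type*} [Fintype 𝒮] [Fintype 𝒳] [Fintype Sh] [Fintype Xh]
    (Q : 𝒳 → ℝ) (U : 𝒳 → 𝒮 → ℝ) (dS : 𝒮 → Sh → ℝ) (dX : 𝒳 → Xh → ℝ) (Ds Dx : ℝ) : ℝ :=
  sInf { r : ℝ | ∃ K : 𝒳 → Sh × Xh → ℝ, IsCondPMF K ∧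
    (∑ x, Q x * ∑ p : Sh × Xh, K x p * ∑ s, U x s * dS s p.1) ≤ Ds ∧
    (∑ x, Q x * ∑ p : Sh × Xh, K x p * dX x p.2) ≤ Dx ∧
    r = mutualInfo (fun x p => Q x * K x p) }

/-- Log-sum inequality. -/
lemma log_sum_ineq {ι : Type*} (s : Finset ι) (a b : ι → ℝ)
    (ha : ∀ i ∈ s, 0 ≤ a i) (hb : ∀ i ∈ s, 0 ≤ b i)
    (hab : ∀ i ∈ s, b i = 0 → a i = 0) :
    (∑ i ∈ s, a i) * Real.log ((∑ i ∈ s, a i) / (∑ i ∈ s, b i)) ≤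
      ∑ i ∈ s, a i * Real.log (a i / b i) := by
  classical
  set t := s.filter (fun i => b i ≠ 0) with ht
  have hbt : ∀ i ∈ t, 0 < b i := fun i hi => by
    have h := Finset.mem_filter.1 hi
    exact lt_of_le_of_ne (hb i h.1) (Ne.symm h.2)
  have hAs : ∑ i ∈ s, a i = ∑ i ∈ t, a i := by
    refine (Finset.sum_subset (Finset.filter_subset _ _) ?_).symm
    intro i hi hit
    exact hab i hi (by_contra fun h => hit (Finset.mem_filter.2 ⟨hi, h⟩))
  have hBs : ∑ i ∈ s, b i = ∑ i ∈ t, b i := by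
    refine (Finset.sum_subset (Finset.filter_subset _ _) ?_).symm
    intro i hi hit
    by_contra h
    exact hit (Finset.mem_filter.2 ⟨hi, h⟩)
  have hRs : ∑ i ∈ s, a i * Real.log (a i / b i)
      = ∑ i ∈ t, a i * Real.log (a i / b i) := by
    refine (Finset.sum_subset (Finset.filter_subset _ _) ?_).symm
    intro i hi hit
    have : a i = 0 := hab i hi (by_contra fun h => hit (Finset.mem_filter.2 ⟨hi, h⟩))
    simp [this]
  rw [hAs, hBs, hRs]
  rcases eq_or_ne (∑ i ∈ t, b i) 0 with hB0 | hB0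
  · have : t = ∅ := by
      by_contra h
      obtain ⟨i, hi⟩ := Finset.nonempty_of_ne_empty h
      have h0 := (Finset.sum_eq_zero_iff_of_nonneg (fun j hj => (hbt j hj).le)).1 hB0 i hi
      exact (hbt i hi).ne' h0
    simp [this]
  · have hBpos : 0 < ∑ i ∈ t, b i :=
      lt_of_le_of_ne (Finset.sum_nonneg fun i hi => (hbt i hi).le) (Ne.symm hB0)
    set A := ∑ i ∈ t, a i with hA
    set B := ∑ i ∈ t, b i with hB
    have hJ := Real.convexOn_mul_log.map_centerMass_le (t := t) (w := b)
      (p := fun i => a i / b i)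
      (fun i hi => (hbt i hi).le) hBpos
      (fun i hi => Set.mem_Ici.2 (div_nonneg (ha i (Finset.filter_subset _ _ hi)) (hbt i hi).le))
    rw [Finset.centerMass, Finset.centerMass] at hJ
    simp only [smul_eq_mul, Function.comp] at hJ
    have h1 : ∑ i ∈ t, b i * (a i / b i) = A := by
      refine Finset.sum_congr rfl fun i hi => ?_
      rw [mul_comm, div_mul_cancel₀ _ (hbt i hi).ne']
    have h2 : ∑ i ∈ t, b i * (a i / b i * Real.log (a i / b i))
        = ∑ i ∈ t, a i * Real.log (a i / b i) := by
      refine Finset.sum_congr rfl fun i hi => ?_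
      rw [← mul_assoc, mul_comm (b i), div_mul_cancel₀ _ (hbt i hi).ne']
    rw [h1, h2] at hJ
    have hBA : B * (B⁻¹ * A) = A := by field_simp
    have hBS : B * (B⁻¹ * ∑ i ∈ t, a i * Real.log (a i / b i))
        = ∑ i ∈ t, a i * Real.log (a i / b i) := by field_simp
    calc A * Real.log (A / B)
        = B * ((B⁻¹ * A) * Real.log (B⁻¹ * A)) := by rw [← mul_assoc, hBA, inv_mul_eq_div]
      _ ≤ B * (B⁻¹ * ∑ i ∈ t, a i * Real.log (a i / b i)) :=
          mul_le_mul_of_nonneg_left hJ hBpos.le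
      _ = _ := hBS

lemma mutualInfo_nonneg {α β : Type*} [Fintype α] [Fintype β] (p : α → β → ℝ)
    (hp : ∀ a b, 0 ≤ p a b) (h1 : ∑ a, ∑ b, p a b = 1) :
    0 ≤ mutualInfo p := by
  classical
  have hB : ∑ q : α × β, (∑ b', p q.1 b') * (∑ a', p a' q.2) = 1 := by
    rw [Fintype.sum_prod_type]
    calc ∑ a, ∑ b, (∑ b', p a b') * (∑ a', p a' b)
        = ∑ a, (∑ b', p a b') * (∑ b, ∑ a', p a' b) := by
          exact Finset.sum_congr rfl fun a _ => (Finset.mul_sum _ _ _).symm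
      _ = ∑ a, ∑ b', p a b' := by
          rw [show (∑ b, ∑ a', p a' b) = 1 from by rw [Finset.sum_comm]; exact h1]
          simp
      _ = 1 := h1
  have hA : ∑ q : α × β, p q.1 q.2 = 1 := by rw [Fintype.sum_prod_type]; exact h1
  have key := log_sum_ineq (Finset.univ : Finset (α × β))
    (fun q => p q.1 q.2) (fun q => (∑ b', p q.1 b') * (∑ a', p a' q.2))
    (fun q _ => hp q.1 q.2)
    (fun q _ => mul_nonneg (Finset.sum_nonneg fun _ _ => hp _ _)
      (Finset.sum_nonneg fun _ _ => hp _ _))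
    (fun q _ h => by
      rcases mul_eq_zero.1 h with h | h
      · exact (Finset.sum_eq_zero_iff_of_nonneg (fun _ _ => hp _ _)).1 h q.2 (Finset.mem_univ _)
      · exact (Finset.sum_eq_zero_iff_of_nonneg (fun _ _ => hp _ _)).1 h q.1 (Finset.mem_univ _))
  rw [hA, hB] at key
  simp only [div_one, Real.log_one, one_mul] at key
  calc (0:ℝ) = 0 := rfl
    _ ≤ _ := by
      refine le_trans key ?_
      rw [mutualInfo, Fintype.sum_prod_type]

/-- **Mutual-information lower bound via the semantic rate-distortion function.**
For the joint pmf `P(s,x,z) = Q_X(x) U_{S|X}(s|x) V_{Z|X}(z|x)`, if there exist decoders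
`g_S : 𝒵 → Ŝ` and `g_X : 𝒵 → X̂` meeting the distortion levels `D_s` and `D_x` in
expectation, then `I(X;Z) ≥ R(Q_X,U_{S|X},D_s,D_x)`. -/
theorem mutualInfo_ge_semRD
    {𝒮 𝒳 𝒵 Sh Xh : Type*}
    [Fintype 𝒮] [Fintype 𝒳] [Fintype 𝒵] [Fintype Sh] [Fintype Xh]
    [Nonempty 𝒮] [Nonempty 𝒳] [Nonempty 𝒵] [Nonempty Sh] [Nonempty Xh]
    (dS : 𝒮 → Sh → ℝ) (dX : 𝒳 → Xh → ℝ) (Ds Dx : ℝ)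
    (hdS : ∀ s sh, 0 ≤ dS s sh) (hdX : ∀ x xh, 0 ≤ dX x xh)
    (hDs : 0 ≤ Ds) (hDx : 0 ≤ Dx)
    (Q : 𝒳 → ℝ) (U : 𝒳 → 𝒮 → ℝ) (V : 𝒳 → 𝒵 → ℝ)
    (hQ : IsPMF Q) (hU : IsCondPMF U) (hV : IsCondPMF V)
    (gS : 𝒵 → Sh) (gX : 𝒵 → Xh)
    (hgS : ∑ x, ∑ s, ∑ z, Q x * U x s * V x z * dS s (gS z) ≤ Ds)
    (hgX : ∑ x, ∑ z, Q x * V x z * dX x (gX z) ≤ Dx) :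
    semRD Q U dS dX Ds Dx ≤ mutualInfo (fun x z => Q x * V x z) := by
  classical
  set f : 𝒵 → Sh × Xh := fun z => (gS z, gX z) with hf
  set K : 𝒳 → Sh × Xh → ℝ := fun x p => ∑ z, if f z = p then V x z else 0 with hKdef
  have hKnn : ∀ x p, 0 ≤ K x p := by
    intro x p
    refine Finset.sum_nonneg fun z _ => ?_
    split
    · exact (hV x).1 z
    · exact le_refl 0
  have hKsum : ∀ x, ∑ p, K x p = 1 := by
    intro x
    simp only [hKdef]
    rw [Finset.sum_comm]
    simp only [Finset.sum_ite_eq, Finset.mem_univ, if_true]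
    exact (hV x).2
  have hKmul : ∀ (x : 𝒳) (C : Sh × Xh → ℝ),
      ∑ p, K x p * C p = ∑ z, V x z * C (f z) := by
    intro x C
    simp only [hKdef, Finset.sum_mul, ite_mul, zero_mul]
    rw [Finset.sum_comm]
    simp only [Finset.sum_ite_eq, Finset.mem_univ, if_true]
  -- distortion constraints
  have hDs' : (∑ x, Q x * ∑ p : Sh × Xh, K x p * ∑ s, U x s * dS s p.1) ≤ Ds := by
    refine le_trans (le_of_eq ?_) hgS
    refine Finset.sum_congr rfl fun x _ => ?_
    rw [hKmul x (fun p => ∑ s, U x s * dS s p.1)]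
    simp only [hf]
    rw [Finset.mul_sum, Finset.sum_comm]
    refine Finset.sum_congr rfl fun z _ => ?_
    rw [Finset.mul_sum, Finset.mul_sum]
    exact Finset.sum_congr rfl fun s _ => by ring
  have hDx' : (∑ x, Q x * ∑ p : Sh × Xh, K x p * dX x p.2) ≤ Dx := by
    refine le_trans (le_of_eq ?_) hgX
    refine Finset.sum_congr rfl fun x _ => ?_
    rw [hKmul x (fun p => dX x p.2)]
    simp only [hf]
    rw [Finset.mul_sum]
    exact Finset.sum_congr rfl fun z _ => by ring
  have hmem : mutualInfo (fun x p => Q x * K x p) ∈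
      { r : ℝ | ∃ K : 𝒳 → Sh × Xh → ℝ, IsCondPMF K ∧
        (∑ x, Q x * ∑ p : Sh × Xh, K x p * ∑ s, U x s * dS s p.1) ≤ Ds ∧
        (∑ x, Q x * ∑ p : Sh × Xh, K x p * dX x p.2) ≤ Dx ∧
        r = mutualInfo (fun x p => Q x * K x p) } :=
    ⟨K, fun x => ⟨hKnn x, hKsum x⟩, hDs', hDx', rfl⟩
  have hbdd : BddBelow { r : ℝ | ∃ K : 𝒳 → Sh × Xh → ℝ, IsCondPMF K ∧
        (∑ x, Q x * ∑ p : Sh × Xh, K x p * ∑ s, U x s * dS s p.1) ≤ Ds ∧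
        (∑ x, Q x * ∑ p : Sh × Xh, K x p * dX x p.2) ≤ Dx ∧
        r = mutualInfo (fun x p => Q x * K x p) } := by
    refine ⟨0, fun r hr => ?_⟩
    obtain ⟨K', hK', -, -, rfl⟩ := hr
    refine mutualInfo_nonneg _ (fun x p => mul_nonneg (hQ.1 x) ((hK' x).1 p)) ?_
    have : ∀ x, ∑ p, Q x * K' x p = Q x := fun x => by
      rw [← Finset.mul_sum, (hK' x).2, mul_one]
    simp only [this]
    exact hQ.2
  refine le_trans (csInf_le hbdd hmem) ?_
  -- data-processing inequality
  have hrowK : ∀ x, ∑ p, Q x * K x p = Q x := fun x => by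
    rw [← Finset.mul_sum, hKsum x, mul_one]
  have hrowV : ∀ x, ∑ z, Q x * V x z = Q x := fun x => by
    rw [← Finset.mul_sum, (hV x).2, mul_one]
  simp only [mutualInfo, hrowK, hrowV]
  refine Finset.sum_le_sum fun x _ => ?_
  conv_rhs => rw [← Finset.sum_fiberwise Finset.univ f]
  refine Finset.sum_le_sum fun p _ => ?_
  have key := log_sum_ineq (Finset.univ.filter fun z => f z = p)
    (fun z => Q x * V x z) (fun z => Q x * ∑ x', Q x' * V x' z)
    (fun z _ => mul_nonneg (hQ.1 x) ((hV x).1 z))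
    (fun z _ => mul_nonneg (hQ.1 x)
      (Finset.sum_nonneg fun x' _ => mul_nonneg (hQ.1 x') ((hV x').1 z)))
    (fun z _ h => by
      rcases mul_eq_zero.1 h with h | h
      · simp [h]
      · exact (Finset.sum_eq_zero_iff_of_nonneg
          (fun x' _ => mul_nonneg (hQ.1 x') ((hV x').1 z))).1 h x (Finset.mem_univ x))
  have hA : ∑ z ∈ Finset.univ.filter fun z => f z = p, Q x * V x z = Q x * K x p := by
    rw [← Finset.mul_sum]
    congr 1
    simp only [hKdef]
    rw [Finset.sum_filter]
  have hB : ∑ z ∈ Finset.univ.filter fun z => f z = p, (Q x * ∑ x', Q x' * V x' z)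
      = Q x * ∑ x', Q x' * K x' p := by
    rw [← Finset.mul_sum]
    congr 1
    rw [Finset.sum_comm]
    refine Finset.sum_congr rfl fun x' _ => ?_
    rw [← Finset.mul_sum]
    congr 1
    simp only [hKdef]
    rw [Finset.sum_filter]
  rw [← hA, ← hB]
  exact key
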